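/- arXiv:1704.07678 — 3 statements merged into one kernel-verified Lean document; each statement's English description precedes it below -/
import Mathlib

section
/- K4_h admits the rule □4h R: if K4_h proves ⋀{σ_r}_{r∈R} ∧ ⋀{γ_i ∧ □_{n_i} γ_i}_{i∈I} → A and n_i < n for all i ∈ I (with all formulas in L∞ and n > r of all formulas involved), then K4_h proves ⋀{□n σ_r}_{r∈R} ∧ ⋀{□_{n_i} γ_i}_{i∈I} → □n A. -/
/-- Poly-modal formulas with modalities `□n` for `n : ℕ`. -/
inductive Fm : Type
  | atom : ℕ → Fm
  | bot  : Fm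
  | and  : Fm → Fm → Fm
  | or   : Fm → Fm → Fm
  | imp  : Fm → Fm → Fm
  | neg  : Fm → Fm
  | box  : ℕ → Fm → Fm
  deriving DecidableEq

def Fm.top : Fm := Fm.neg Fm.bot

/-- `i` occurs as a modality index in the formula. -/
def occursBox (i : ℕ) : Fm → Prop
  | .atom _ => False
  | .bot => False
  | .and A B => occursBox i A ∨ occursBox i B
  | .or A B => occursBox i A ∨ occursBox i B
  | .imp A B => occursBox i A ∨ occursBox i B
  | .neg A => occursBox i A
  | .box n A => i = n ∨ occursBox i A

/-- `n` is strictly greater than every modality index occurring in `A`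
    (the paper's "`n > r(A)`"). -/
def BoxLt (A : Fm) (n : ℕ) : Prop := ∀ i, occursBox i A → i < n

/-- The language `L∞`: each box index strictly exceeds all box indices in its scope. -/
inductive Linf : Fm → Prop
  | atom (k : ℕ) : Linf (.atom k)
  | bot : Linf .bot
  | and {A B : Fm} : Linf A → Linf B → Linf (.and A B)
  | or {A B : Fm} : Linf A → Linf B → Linf (.or A B)
  | imp {A B : Fm} : Linf A → Linf B → Linf (.imp A B)
  | neg {A : Fm} : Linf A → Linf (.neg A)
  | box {A : Fm} (n : ℕ) : Linf A → BoxLt A n → Linf (.box n A)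

/-- Boolean evaluation treating atoms and boxed formulas as propositional atoms. -/
def evalWith (v : Fm → Bool) : Fm → Bool
  | .atom k => v (.atom k)
  | .bot => false
  | .and A B => evalWith v A && evalWith v B
  | .or A B => evalWith v A || evalWith v B
  | .imp A B => !(evalWith v A) || evalWith v B
  | .neg A => !(evalWith v A)
  | .box n A => v (.box n A)

/-- Classical propositional tautologies (on `L∞`-formulas as atoms). -/
def Taut (A : Fm) : Prop := ∀ v, evalWith v A = true

def axH (F : Fm) : Prop := ∃ A n, Linf (Fm.box n A) ∧ F = (Fm.box n A).imp (Fm.box (n+1) A)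
def axK (F : Fm) : Prop := ∃ A B n, Linf (Fm.box n (A.imp B)) ∧
    F = (Fm.box n (A.imp B)).imp ((Fm.box n A).imp (Fm.box n B))
def axFour (F : Fm) : Prop := ∃ A n, Linf (Fm.box n A) ∧
    F = (Fm.box n A).imp (Fm.box (n+1) (Fm.box n A))
def axD (F : Fm) : Prop := ∃ n, F = Fm.neg (Fm.box n Fm.bot)
def axT (F : Fm) : Prop := ∃ A n, Linf (Fm.box n A) ∧ F = (Fm.box n A).imp A
def axL (F : Fm) : Prop := ∃ A n, Linf (Fm.box n A) ∧
    F = (Fm.box (n+1) ((Fm.box n A).imp A)).imp (Fm.box n A)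
def axFive (F : Fm) : Prop := ∃ A n, Linf (Fm.box n A) ∧
    F = ((Fm.box n A).neg).imp (Fm.box (n+1) ((Fm.box n A).neg))

/-- Hilbert-style provability over `L∞` from a set of axiom (schema instances):
    classical tautologies, modus ponens, and necessitation restricted to `n > r(A)`. -/
inductive Prv (Ax : Fm → Prop) : Fm → Prop
  | ax {A : Fm} : Ax A → Prv Ax A
  | taut {A : Fm} : Linf A → Taut A → Prv Ax A
  | mp {A B : Fm} : Prv Ax (A.imp B) → Prv Ax A → Prv Ax B
  | nec {A : Fm} (n : ℕ) : Prv Ax A → BoxLt A n → Prv Ax (Fm.box n A)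

def K4hAx (F : Fm) : Prop := axH F ∨ axK F ∨ axFour F
def KD4hAx (F : Fm) : Prop := K4hAx F ∨ axD F
def S4hAx (F : Fm) : Prop := K4hAx F ∨ axT F
def GLhAx (F : Fm) : Prop := K4hAx F ∨ axL F
def KD45hAx (F : Fm) : Prop := KD4hAx F ∨ axFive F

def K4h : Fm → Prop := Prv K4hAx
def KD4h : Fm → Prop := Prv KD4hAx
def S4h : Fm → Prop := Prv S4hAx
def GLh : Fm → Prop := Prv GLhAx

def conjList (l : List Fm) : Fm := l.foldr Fm.and Fm.top
def disjList (l : List Fm) : Fm := l.foldr Fm.or Fm.bot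

/-- `Γ ⊢_L A` : some finite conjunction of members of `Γ` implies `A` in `L`. -/
def Deriv (Ax : Fm → Prop) (Γ : Set Fm) (A : Fm) : Prop :=
  ∃ l : List Fm, (∀ B ∈ l, B ∈ Γ) ∧ Prv Ax ((conjList l).imp A)


section Helpers

lemma boxLt_mono {A : Fm} {m n : ℕ} (h : BoxLt A m) (hmn : m ≤ n) : BoxLt A n :=
  fun i hi => lt_of_lt_of_le (h i hi) hmn

lemma boxLt_imp {A B : Fm} {n : ℕ} (hA : BoxLt A n) (hB : BoxLt B n) :
    BoxLt (A.imp B) n := fun i hi => hi.elim (hA i) (hB i)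

lemma boxLt_and {A B : Fm} {n : ℕ} (hA : BoxLt A n) (hB : BoxLt B n) :
    BoxLt (A.and B) n := fun i hi => hi.elim (hA i) (hB i)

lemma boxLt_box {A : Fm} {m n : ℕ} (h : m < n) (hA : BoxLt A n) :
    BoxLt (.box m A) n := fun i hi => hi.elim (fun e => e ▸ h) (hA i)

lemma boxLt_top {n : ℕ} : BoxLt Fm.top n := fun _ hi => hi.elim

lemma linf_top : Linf Fm.top := Linf.neg Linf.bot

lemma linf_box_inv {n : ℕ} {A : Fm} (h : Linf (.box n A)) : Linf A ∧ BoxLt A n := by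
  cases h with
  | box n hA hb => exact ⟨hA, hb⟩

lemma linf_conj {l : List Fm} (h : ∀ B ∈ l, Linf B) : Linf (conjList l) := by
  induction l with
  | nil => exact linf_top
  | cons B l ih =>
      exact Linf.and (h B (by simp)) (ih fun C hC => h C (by simp [hC]))

lemma boxLt_conj {l : List Fm} {n : ℕ} (h : ∀ B ∈ l, BoxLt B n) :
    BoxLt (conjList l) n := by
  induction l with
  | nil => exact boxLt_top
  | cons B l ih =>
      exact boxLt_and (h B (by simp)) (ih fun C hC => h C (by simp [hC]))

variable {Ax : Fm → Prop}

lemma prv_id {A : Fm} (lA : Linf A) : Prv Ax (A.imp A) :=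
  Prv.taut (lA.imp lA) (by intro v; simp only [evalWith]; cases evalWith v A <;> rfl)

lemma prv_trans {A B C : Fm} (lA : Linf A) (lB : Linf B) (lC : Linf C)
    (h1 : Prv Ax (A.imp B)) (h2 : Prv Ax (B.imp C)) : Prv Ax (A.imp C) :=
  ((Prv.taut (Linf.imp (lA.imp lB) ((lB.imp lC).imp (lA.imp lC)))
    (by intro v; simp only [evalWith]
        cases evalWith v A <;> cases evalWith v B <;> cases evalWith v C <;> rfl)).mp h1).mp h2

lemma prv_and_intro {X A B : Fm} (lX : Linf X) (lA : Linf A) (lB : Linf B)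
    (h1 : Prv Ax (X.imp A)) (h2 : Prv Ax (X.imp B)) : Prv Ax (X.imp (A.and B)) :=
  ((Prv.taut (Linf.imp (lX.imp lA) ((lX.imp lB).imp (lX.imp (lA.and lB))))
    (by intro v; simp only [evalWith]
        cases evalWith v X <;> cases evalWith v A <;> cases evalWith v B <;> rfl)).mp h1).mp h2

lemma prv_proj1 {A B : Fm} (lA : Linf A) (lB : Linf B) :
    Prv Ax ((A.and B).imp A) :=
  Prv.taut ((lA.and lB).imp lA)
    (by intro v; simp only [evalWith]; cases evalWith v A <;> cases evalWith v B <;> rfl)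

lemma prv_proj2 {A B : Fm} (lA : Linf A) (lB : Linf B) :
    Prv Ax ((A.and B).imp B) :=
  Prv.taut ((lA.and lB).imp lB)
    (by intro v; simp only [evalWith]; cases evalWith v A <;> cases evalWith v B <;> rfl)

lemma prv_uncurry {A B C : Fm} (lA : Linf A) (lB : Linf B) (lC : Linf C)
    (h : Prv Ax (A.imp (B.imp C))) : Prv Ax ((A.and B).imp C) :=
  (Prv.taut (Linf.imp (lA.imp (lB.imp lC)) ((lA.and lB).imp lC))
    (by intro v; simp only [evalWith]
        cases evalWith v A <;> cases evalWith v B <;> cases evalWith v C <;> rfl)).mp h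

lemma prv_K {A B : Fm} {n : ℕ} (h : Linf (.box n (A.imp B))) :
    Prv K4hAx ((Fm.box n (A.imp B)).imp ((Fm.box n A).imp (Fm.box n B))) :=
  Prv.ax (Or.inr (Or.inl ⟨A, B, n, h, rfl⟩))

lemma prv_box_and {A B : Fm} {n : ℕ} (lA : Linf A) (lB : Linf B)
    (bA : BoxLt A n) (bB : BoxLt B n) :
    Prv K4hAx (((Fm.box n A).and (Fm.box n B)).imp (Fm.box n (A.and B))) := by
  have bi : BoxLt (A.imp (B.imp (A.and B))) n :=
    boxLt_imp bA (boxLt_imp bB (boxLt_and bA bB))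
  have h1 : Prv K4hAx (Fm.box n (A.imp (B.imp (A.and B)))) :=
    Prv.nec n (Prv.taut (lA.imp (lB.imp (lA.and lB)))
      (by intro v; simp only [evalWith]
          cases evalWith v A <;> cases evalWith v B <;> rfl)) bi
  have h2 := (prv_K (Linf.box n (lA.imp (lB.imp (lA.and lB))) bi)).mp h1
  have h3 := prv_K (Linf.box n (lB.imp (lA.and lB)) (boxLt_imp bB (boxLt_and bA bB)))
  have h4 : Prv K4hAx ((Fm.box n A).imp ((Fm.box n B).imp (Fm.box n (A.and B)))) :=
    prv_trans (Linf.box n lA bA)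
      (Linf.box n (lB.imp (lA.and lB)) (boxLt_imp bB (boxLt_and bA bB)))
      (Linf.imp (Linf.box n lB bB) (Linf.box n (lA.and lB) (boxLt_and bA bB))) h2 h3
  exact prv_uncurry (Linf.box n lA bA) (Linf.box n lB bB)
    (Linf.box n (lA.and lB) (boxLt_and bA bB)) h4

lemma prv_H_chain {A : Fm} (lA : Linf A) {m k : ℕ} (bA : BoxLt A m) (h : m ≤ k) :
    Prv K4hAx ((Fm.box m A).imp (Fm.box k A)) := by
  induction k, h using Nat.le_induction with
  | base => exact prv_id (Linf.box m lA bA)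
  | succ k hk ih =>
      exact prv_trans (Linf.box m lA bA) (Linf.box k lA (boxLt_mono bA hk))
        (Linf.box (k+1) lA (boxLt_mono bA (hk.trans (Nat.le_succ k))))
        ih (Prv.ax (Or.inl ⟨A, k, Linf.box k lA (boxLt_mono bA hk), rfl⟩))

lemma prv_G_step {γ : Fm} {m n : ℕ} (h : Linf (.box m γ)) (hmn : m < n) :
    Prv K4hAx ((Fm.box m γ).imp (Fm.box n (γ.and (.box m γ)))) := by
  obtain ⟨lγ, bγ⟩ := linf_box_inv h
  have bγn : BoxLt γ n := boxLt_mono bγ hmn.le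
  have bbox : BoxLt (Fm.box m γ) n := boxLt_box hmn bγn
  have h4 : Prv K4hAx ((Fm.box m γ).imp (Fm.box (m+1) (Fm.box m γ))) :=
    Prv.ax (Or.inr (Or.inr ⟨γ, m, h, rfl⟩))
  have hch : Prv K4hAx ((Fm.box (m+1) (Fm.box m γ)).imp (Fm.box n (Fm.box m γ))) :=
    prv_H_chain h (boxLt_box (Nat.lt_succ_self m) (boxLt_mono bγ (Nat.le_succ m))) hmn
  have t1 : Prv K4hAx ((Fm.box m γ).imp (Fm.box n (Fm.box m γ))) :=
    prv_trans h (Linf.box (m+1) h (boxLt_box (Nat.lt_succ_self m) (boxLt_mono bγ (Nat.le_succ m))))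
      (Linf.box n h bbox) h4 hch
  have t2 : Prv K4hAx ((Fm.box m γ).imp (Fm.box n γ)) := prv_H_chain lγ bγ hmn.le
  have t3 : Prv K4hAx ((Fm.box m γ).imp ((Fm.box n γ).and (Fm.box n (Fm.box m γ)))) :=
    prv_and_intro h (Linf.box n lγ bγn) (Linf.box n h bbox) t2 t1
  exact prv_trans h ((Linf.box n lγ bγn).and (Linf.box n h bbox))
    (Linf.box n (lγ.and h) (boxLt_and bγn bbox)) t3
    (prv_box_and lγ h bγn bbox)

lemma prv_conj_box (n : ℕ) (l : List (Fm × Fm))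
    (h : ∀ p ∈ l, Linf p.1 ∧ BoxLt p.1 n ∧ Linf p.2 ∧ Prv K4hAx (p.2.imp (Fm.box n p.1))) :
    Prv K4hAx ((conjList (l.map Prod.snd)).imp (Fm.box n (conjList (l.map Prod.fst)))) := by
  induction l with
  | nil =>
      exact (Prv.taut (Linf.imp (Linf.box n linf_top boxLt_top)
          (linf_top.imp (Linf.box n linf_top boxLt_top)))
          (by intro v
              show (!(v (Fm.box n Fm.top)) ||
                (!(evalWith v Fm.top) || v (Fm.box n Fm.top))) = true
              cases v (Fm.box n Fm.top) <;> rfl)).mp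
        (Prv.nec n (Prv.taut linf_top (fun v => rfl)) boxLt_top)
  | cons p l ih =>
      obtain ⟨lB, bB, lC, hP⟩ := h p (by simp)
      have htl : ∀ q ∈ l, Linf q.1 ∧ BoxLt q.1 n ∧ Linf q.2 ∧
          Prv K4hAx (q.2.imp (Fm.box n q.1)) := fun q hq => h q (by simp [hq])
      have IH := ih htl
      have lF : Linf (conjList (l.map Prod.fst)) :=
        linf_conj fun B hB => by
          obtain ⟨q, hq, rfl⟩ := List.mem_map.1 hB
          exact (htl q hq).1
      have bF : BoxLt (conjList (l.map Prod.fst)) n :=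
        boxLt_conj fun B hB => by
          obtain ⟨q, hq, rfl⟩ := List.mem_map.1 hB
          exact (htl q hq).2.1
      have lSn : Linf (conjList (l.map Prod.snd)) :=
        linf_conj fun B hB => by
          obtain ⟨q, hq, rfl⟩ := List.mem_map.1 hB
          exact (htl q hq).2.2.1
      have lCD : Linf (p.2.and (conjList (l.map Prod.snd))) := lC.and lSn
      have c1 : Prv K4hAx ((p.2.and (conjList (l.map Prod.snd))).imp (Fm.box n p.1)) :=
        prv_trans lCD lC (Linf.box n lB bB) (prv_proj1 lC lSn) hP
      have c2 : Prv K4hAx ((p.2.and (conjList (l.map Prod.snd))).imp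
          (Fm.box n (conjList (l.map Prod.fst)))) :=
        prv_trans lCD lSn (Linf.box n lF bF) (prv_proj2 lC lSn) IH
      have c3 := prv_and_intro lCD (Linf.box n lB bB) (Linf.box n lF bF) c1 c2
      exact prv_trans lCD ((Linf.box n lB bB).and (Linf.box n lF bF))
        (Linf.box n (lB.and lF) (boxLt_and bB bF)) c3
        (prv_box_and lB lF bB bF)

end Helpers

/-- `K4_h` admits the rule `□4h R`. -/
theorem K4h_box4R_admissible (n : ℕ) (S : List Fm) (G : List (ℕ × Fm)) (A : Fm)
    (hn : ∀ p ∈ G, p.1 < n)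
    (hS : ∀ σ ∈ S, Linf (Fm.box n σ))
    (hG : ∀ p ∈ G, Linf (Fm.box p.1 p.2))
    (hA : Linf (Fm.box n A))
    (h : K4h ((conjList (S ++ G.map fun p => (p.2).and (Fm.box p.1 p.2))).imp A)) :
    K4h ((conjList (S.map (Fm.box n) ++ G.map fun p => Fm.box p.1 p.2)).imp
      (Fm.box n A)) := by
  obtain ⟨lA, bA⟩ := linf_box_inv hA
  set l : List (Fm × Fm) :=
    S.map (fun σ => (σ, Fm.box n σ)) ++
    G.map (fun p => ((p.2).and (Fm.box p.1 p.2), Fm.box p.1 p.2)) with hl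
  have e1 : l.map Prod.fst = S ++ G.map fun p => (p.2).and (Fm.box p.1 p.2) := by
    simp [hl, Function.comp_def]
  have e2 : l.map Prod.snd = S.map (Fm.box n) ++ G.map fun p => Fm.box p.1 p.2 := by
    simp [hl, Function.comp_def]
  have hcond : ∀ p ∈ l, Linf p.1 ∧ BoxLt p.1 n ∧ Linf p.2 ∧
      Prv K4hAx (p.2.imp (Fm.box n p.1)) := by
    intro p hp
    rcases List.mem_append.1 hp with hp | hp
    · obtain ⟨σ, hσ, rfl⟩ := List.mem_map.1 hp
      obtain ⟨lσ, bσ⟩ := linf_box_inv (hS σ hσ)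
      exact ⟨lσ, bσ, hS σ hσ, prv_id (hS σ hσ)⟩
    · obtain ⟨q, hq, rfl⟩ := List.mem_map.1 hp
      obtain ⟨lγ, bγ⟩ := linf_box_inv (hG q hq)
      have hqn : q.1 < n := hn q hq
      refine ⟨lγ.and (hG q hq), boxLt_and (boxLt_mono bγ hqn.le) (boxLt_box hqn (boxLt_mono bγ hqn.le)), hG q hq, ?_⟩
      exact prv_G_step (hG q hq) hqn
  have hmain := prv_conj_box n l hcond
  rw [e1, e2] at hmain
  set Conj : Fm := conjList (S ++ G.map fun p => (p.2).and (Fm.box p.1 p.2)) with hC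
  have lConj : Linf Conj := by
    refine linf_conj ?_
    intro B hB
    rcases List.mem_append.1 hB with hB | hB
    · exact (linf_box_inv (hS B hB)).1
    · obtain ⟨q, hq, rfl⟩ := List.mem_map.1 hB
      exact (linf_box_inv (hG q hq)).1.and (hG q hq)
  have bConj : BoxLt Conj n := by
    refine boxLt_conj ?_
    intro B hB
    rcases List.mem_append.1 hB with hB | hB
    · exact (linf_box_inv (hS B hB)).2
    · obtain ⟨q, hq, rfl⟩ := List.mem_map.1 hB
      obtain ⟨lγ, bγ⟩ := linf_box_inv (hG q hq)
      have hqn : q.1 < n := hn q hq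
      exact boxLt_and (boxLt_mono bγ hqn.le) (boxLt_box hqn (boxLt_mono bγ hqn.le))
  have bimp : BoxLt (Conj.imp A) n := boxLt_imp bConj bA
  have hnec : Prv K4hAx (Fm.box n (Conj.imp A)) := Prv.nec n h bimp
  have hK := (prv_K (Linf.box n (lConj.imp lA) bimp)).mp hnec
  have lSn : Linf (conjList (S.map (Fm.box n) ++ G.map fun p => Fm.box p.1 p.2)) := by
    refine linf_conj ?_
    intro B hB
    rcases List.mem_append.1 hB with hB | hB
    · obtain ⟨σ, hσ, rfl⟩ := List.mem_map.1 hB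
      exact hS σ hσ
    · obtain ⟨q, hq, rfl⟩ := List.mem_map.1 hB
      exact hG q hq
  exact prv_trans lSn (Linf.box n lConj bConj) (Linf.box n lA bA) hmain hK
end

section
/- S4_h admits the left box rule: if S4_h proves (A ∧ ⋀Γ) → ⋁Δ, then for any n > r(A), S4_h proves (□n A ∧ ⋀Γ) → ⋁Δ. -/
lemma linf_S4hAx {F : Fm} (h : S4hAx F) : Linf F := by
  rcases h with (⟨A, m, hL, rfl⟩ | ⟨A, B, m, hL, rfl⟩ | ⟨A, m, hL, rfl⟩) | ⟨A, m, hL, rfl⟩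
  · cases hL with
    | box _ hA hlt =>
      exact Linf.imp (Linf.box _ hA hlt) (Linf.box _ hA (fun i hi => Nat.lt_succ_of_lt (hlt i hi)))
  · cases hL with
    | box _ hAB hlt =>
      cases hAB with
      | imp hA hB =>
        exact Linf.imp (Linf.box _ (Linf.imp hA hB) hlt)
          (Linf.imp (Linf.box _ hA (fun i hi => hlt i (Or.inl hi)))
            (Linf.box _ hB (fun i hi => hlt i (Or.inr hi))))
  · cases hL with
    | box _ hA hlt =>
      exact Linf.imp (Linf.box _ hA hlt)
        (Linf.box _ (Linf.box _ hA hlt) (fun i hi => by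
          rcases hi with rfl | hi
          · exact Nat.lt_succ_self _
          · exact Nat.lt_succ_of_lt (hlt i hi)))
  · cases hL with
    | box _ hA hlt => exact Linf.imp (Linf.box _ hA hlt) hA

lemma linf_of_prv {F : Fm} (h : Prv S4hAx F) : Linf F := by
  induction h with
  | ax hax => exact linf_S4hAx hax
  | taut hL _ => exact hL
  | mp _ _ ih1 _ => cases ih1; assumption
  | nec m _ hlt ih => exact Linf.box m ih hlt

/-- `S4_h` admits the left box rule. -/
theorem S4h_boxL_admissible (A : Fm) (Γ Δ : List Fm) (n : ℕ)
    (hA : Linf A) (hn : BoxLt A n)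
    (h : S4h ((A.and (conjList Γ)).imp (disjList Δ))) :
    S4h (((Fm.box n A).and (conjList Γ)).imp (disjList Δ)) := by
  have hLbox : Linf (Fm.box n A) := Linf.box n hA hn
  have hT : Prv S4hAx ((Fm.box n A).imp A) :=
    Prv.ax (Or.inr ⟨A, n, hLbox, rfl⟩)
  have hLimp : Linf ((A.and (conjList Γ)).imp (disjList Δ)) := linf_of_prv h
  obtain ⟨hLand, hLD⟩ : Linf (A.and (conjList Γ)) ∧ Linf (disjList Δ) := by
    cases hLimp; constructor <;> assumption
  have hLC : Linf (conjList Γ) := by cases hLand; assumption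
  set C := conjList Γ
  set D := disjList Δ
  have htaut : Prv S4hAx (((Fm.box n A).imp A).imp
      (((A.and C).imp D).imp (((Fm.box n A).and C).imp D))) := by
    apply Prv.taut
    · exact Linf.imp (Linf.imp hLbox hA)
        (Linf.imp (Linf.imp hLand hLD) (Linf.imp (Linf.and hLbox hLC) hLD))
    · intro v
      simp only [evalWith]
      cases v (Fm.box n A) <;> cases evalWith v A <;> cases evalWith v C <;>
        cases evalWith v D <;> rfl
  exact Prv.mp (Prv.mp htaut hT) h
end

section
/- S4_h version of relativization: fix n and Z ∈ L∞ with r(Z) < n and define A^Z as before (boxes of index ≥ n become □i(Z → B^Z)). Then if S4_h ⊢ A, then S4_h ⊢ Z → A^Z. -/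
/-- Relativization: replace each `□i B` with `i ≥ n` by `□i (Z → B^Z)`. -/
def relZ (n : ℕ) (Z : Fm) : Fm → Fm
  | .atom k => .atom k
  | .bot => .bot
  | .and A B => .and (relZ n Z A) (relZ n Z B)
  | .or A B => .or (relZ n Z A) (relZ n Z B)
  | .imp A B => .imp (relZ n Z A) (relZ n Z B)
  | .neg A => .neg (relZ n Z A)
  | .box i A => if i < n then .box i (relZ n Z A) else .box i (Z.imp (relZ n Z A))

section Helpers

/-! ### BoxLt helpers -/

lemma boxLt_imp_s8 {X Y : Fm} {m : ℕ} (hX : BoxLt X m) (hY : BoxLt Y m) :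
    BoxLt (X.imp Y) m := fun j hj => hj.elim (hX j) (hY j)

lemma boxLt_imp_left {X Y : Fm} {m : ℕ} (h : BoxLt (X.imp Y) m) : BoxLt X m :=
  fun j hj => h j (Or.inl hj)

lemma boxLt_imp_right {X Y : Fm} {m : ℕ} (h : BoxLt (X.imp Y) m) : BoxLt Y m :=
  fun j hj => h j (Or.inr hj)

lemma boxLt_box_s8 {X : Fm} {i m : ℕ} (him : i < m) (hX : BoxLt X m) :
    BoxLt (Fm.box i X) m := fun j hj => hj.elim (fun e => e ▸ him) (hX j)

lemma boxLt_mono_s8 {X : Fm} {m m' : ℕ} (h : BoxLt X m) (hm : m ≤ m') : BoxLt X m' :=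
  fun j hj => lt_of_lt_of_le (h j hj) hm

/-! ### Linf inversion -/

lemma linf_imp_inv {X Y : Fm} (h : Linf (X.imp Y)) : Linf X ∧ Linf Y := by
  cases h with | imp hX hY => exact ⟨hX, hY⟩

lemma linf_box_inv_s8 {X : Fm} {m : ℕ} (h : Linf (Fm.box m X)) : Linf X ∧ BoxLt X m := by
  cases h with | box _ hX hlt => exact ⟨hX, hlt⟩

/-! ### Tautologies -/

lemma taut_weaken (X Y : Fm) : Taut (X.imp (Y.imp X)) := by
  intro v; simp only [evalWith]
  cases evalWith v X <;> cases evalWith v Y <;> rfl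

lemma taut_dist (X Y W : Fm) :
    Taut ((X.imp (Y.imp W)).imp ((X.imp Y).imp (X.imp W))) := by
  intro v; simp only [evalWith]
  cases evalWith v X <;> cases evalWith v Y <;> cases evalWith v W <;> rfl

lemma taut_hs (X Y W : Fm) :
    Taut ((X.imp Y).imp ((Y.imp W).imp (X.imp W))) := by
  intro v; simp only [evalWith]
  cases evalWith v X <;> cases evalWith v Y <;> cases evalWith v W <;> rfl

lemma taut_swap (X Y W : Fm) :
    Taut ((X.imp (Y.imp W)).imp (Y.imp (X.imp W))) := by
  intro v; simp only [evalWith]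
  cases evalWith v X <;> cases evalWith v Y <;> cases evalWith v W <;> rfl

/-! ### Derived rules -/

variable {Ax : Fm → Prop}

lemma prv_weaken {X Y : Fm} (hX : Linf X) (hY : Linf Y) (h : Prv Ax X) :
    Prv Ax (Y.imp X) :=
  Prv.mp (Prv.taut (Linf.imp hX (Linf.imp hY hX)) (taut_weaken X Y)) h

lemma prv_frege {X Y W : Fm} (hX : Linf X) (hY : Linf Y) (hW : Linf W)
    (h1 : Prv Ax (X.imp (Y.imp W))) (h2 : Prv Ax (X.imp Y)) : Prv Ax (X.imp W) :=
  Prv.mp (Prv.mp (Prv.taut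
    (Linf.imp (Linf.imp hX (Linf.imp hY hW)) (Linf.imp (Linf.imp hX hY) (Linf.imp hX hW)))
    (taut_dist X Y W)) h1) h2

lemma prv_hs {X Y W : Fm} (hX : Linf X) (hY : Linf Y) (hW : Linf W)
    (h1 : Prv Ax (X.imp Y)) (h2 : Prv Ax (Y.imp W)) : Prv Ax (X.imp W) :=
  Prv.mp (Prv.mp (Prv.taut
    (Linf.imp (Linf.imp hX hY) (Linf.imp (Linf.imp hY hW) (Linf.imp hX hW)))
    (taut_hs X Y W)) h1) h2

lemma prv_swap {X Y W : Fm} (hX : Linf X) (hY : Linf Y) (hW : Linf W)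
    (h : Prv Ax (X.imp (Y.imp W))) : Prv Ax (Y.imp (X.imp W)) :=
  Prv.mp (Prv.taut
    (Linf.imp (Linf.imp hX (Linf.imp hY hW)) (Linf.imp hY (Linf.imp hX hW)))
    (taut_swap X Y W)) h

/-! ### S4h-specific rules -/

lemma S4h_linf {A : Fm} (h : S4h A) : Linf A := by
  induction h with
  | taut h _ => exact h
  | mp _ _ ih1 _ => exact (linf_imp_inv ih1).2
  | nec m _ hlt ih => exact Linf.box m ih hlt
  | ax hax =>
    rcases hax with ((⟨B, m, hB, rfl⟩ | ⟨B, C, m, hBC, rfl⟩ | ⟨B, m, hB, rfl⟩) | ⟨B, m, hB, rfl⟩)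
    · obtain ⟨h1, h2⟩ := linf_box_inv_s8 hB
      exact Linf.imp hB (Linf.box (m+1) h1 (boxLt_mono_s8 h2 (Nat.le_succ m)))
    · obtain ⟨h1, h2⟩ := linf_box_inv_s8 hBC
      obtain ⟨hB', hC'⟩ := linf_imp_inv h1
      exact Linf.imp hBC (Linf.imp (Linf.box m hB' (boxLt_imp_left h2))
        (Linf.box m hC' (boxLt_imp_right h2)))
    · obtain ⟨h1, h2⟩ := linf_box_inv_s8 hB
      exact Linf.imp hB (Linf.box (m+1) hB
        (boxLt_box_s8 (Nat.lt_succ_self m) (boxLt_mono_s8 h2 (Nat.le_succ m))))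
    · exact Linf.imp hB (linf_box_inv_s8 hB).1

lemma S4h_box_mono {X Y : Fm} {m : ℕ} (hX : Linf X) (hY : Linf Y)
    (hXm : BoxLt X m) (hYm : BoxLt Y m) (h : S4h (X.imp Y)) :
    S4h ((Fm.box m X).imp (Fm.box m Y)) :=
  Prv.mp
    (Prv.ax (Or.inl (Or.inr (Or.inl ⟨X, Y, m, Linf.box m (Linf.imp hX hY) (boxLt_imp_s8 hXm hYm), rfl⟩))))
    (Prv.nec m h (boxLt_imp_s8 hXm hYm))

/-! ### relZ structure lemmas -/

lemma occursBox_relZ {j n : ℕ} {Z : Fm} : ∀ {A : Fm},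
    occursBox j (relZ n Z A) → occursBox j A ∨ occursBox j Z := by
  intro A
  induction A with
  | atom k => simp [relZ, occursBox]
  | bot => simp [relZ, occursBox]
  | and A B ihA ihB =>
    simp only [relZ, occursBox]
    rintro (h | h)
    · rcases ihA h with h' | h'
      · exact Or.inl (Or.inl h')
      · exact Or.inr h'
    · rcases ihB h with h' | h'
      · exact Or.inl (Or.inr h')
      · exact Or.inr h'
  | or A B ihA ihB =>
    simp only [relZ, occursBox]
    rintro (h | h)
    · rcases ihA h with h' | h'
      · exact Or.inl (Or.inl h')
      · exact Or.inr h'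
    · rcases ihB h with h' | h'
      · exact Or.inl (Or.inr h')
      · exact Or.inr h'
  | imp A B ihA ihB =>
    simp only [relZ, occursBox]
    rintro (h | h)
    · rcases ihA h with h' | h'
      · exact Or.inl (Or.inl h')
      · exact Or.inr h'
    · rcases ihB h with h' | h'
      · exact Or.inl (Or.inr h')
      · exact Or.inr h'
  | neg A ihA =>
    simp only [relZ, occursBox]
    intro h
    rcases ihA h with h' | h'
    · exact Or.inl h'
    · exact Or.inr h'
  | box i A ihA =>
    by_cases hi : i < n <;> simp only [relZ, hi, if_pos, if_neg, if_true, if_false, occursBox]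
    · rintro (rfl | h)
      · exact Or.inl (Or.inl rfl)
      · rcases ihA h with h' | h'
        · exact Or.inl (Or.inr h')
        · exact Or.inr h'
    · rintro (rfl | h | h)
      · exact Or.inl (Or.inl rfl)
      · exact Or.inr h
      · rcases ihA h with h' | h'
        · exact Or.inl (Or.inr h')
        · exact Or.inr h'

lemma boxLt_relZ {n m : ℕ} {Z A : Fm} (hZ : BoxLt Z n) (hn : n ≤ m)
    (hA : BoxLt A m) : BoxLt (relZ n Z A) m := fun j hj =>
  (occursBox_relZ hj).elim (hA j) (fun h => lt_of_lt_of_le (hZ j h) hn)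

lemma relZ_eq_self {n : ℕ} {Z : Fm} : ∀ {A : Fm}, BoxLt A n → relZ n Z A = A := by
  intro A
  induction A with
  | atom k => intro _; rfl
  | bot => intro _; rfl
  | and A B ihA ihB =>
    intro h
    have hA : BoxLt A n := fun j hj => h j (Or.inl hj)
    have hB : BoxLt B n := fun j hj => h j (Or.inr hj)
    simp [relZ, ihA hA, ihB hB]
  | or A B ihA ihB =>
    intro h
    have hA : BoxLt A n := fun j hj => h j (Or.inl hj)
    have hB : BoxLt B n := fun j hj => h j (Or.inr hj)
    simp [relZ, ihA hA, ihB hB]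
  | imp A B ihA ihB =>
    intro h
    have hA : BoxLt A n := fun j hj => h j (Or.inl hj)
    have hB : BoxLt B n := fun j hj => h j (Or.inr hj)
    simp [relZ, ihA hA, ihB hB]
  | neg A ihA =>
    intro h
    have hA : BoxLt A n := fun j hj => h j hj
    simp [relZ, ihA hA]
  | box i A ihA =>
    intro h
    have hi : i < n := h i (Or.inl rfl)
    have hA : BoxLt A n := fun j hj => h j (Or.inr hj)
    simp [relZ, hi, ihA hA]

lemma linf_relZ {n : ℕ} {Z : Fm} (hZ : Linf Z) (hrZ : BoxLt Z n) :
    ∀ {A : Fm}, Linf A → Linf (relZ n Z A) := by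
  intro A h
  induction h with
  | atom k => exact Linf.atom k
  | bot => exact Linf.bot
  | and _ _ ih1 ih2 => exact Linf.and ih1 ih2
  | or _ _ ih1 ih2 => exact Linf.or ih1 ih2
  | imp _ _ ih1 ih2 => exact Linf.imp ih1 ih2
  | neg _ ih => exact Linf.neg ih
  | box m hA hlt ih =>
    rename_i B
    by_cases hm : m < n
    · have : relZ n Z B = B := relZ_eq_self (fun j hj => lt_trans (hlt j hj) hm)
      simp only [relZ, if_pos hm, this]
      exact Linf.box m hA hlt
    · have hnm : n ≤ m := Nat.le_of_not_lt hm
      simp only [relZ, if_neg hm]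
      exact Linf.box m (Linf.imp hZ ih)
        (boxLt_imp_s8 (boxLt_mono_s8 hrZ hnm) (boxLt_relZ hrZ hnm hlt))

/-! ### relZ preserves tautologies -/

lemma evalWith_relZ (v : Fm → Bool) (n : ℕ) (Z : Fm) : ∀ A : Fm,
    evalWith (fun F => evalWith v (relZ n Z F)) A = evalWith v (relZ n Z A) := by
  intro A
  induction A with
  | atom k => rfl
  | bot => rfl
  | and A B ihA ihB => simp [evalWith, relZ, ihA, ihB]
  | or A B ihA ihB => simp [evalWith, relZ, ihA, ihB]
  | imp A B ihA ihB => simp [evalWith, relZ, ihA, ihB]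
  | neg A ihA => simp [evalWith, relZ, ihA]
  | box i A ihA => rfl

lemma taut_relZ {n : ℕ} {Z A : Fm} (h : Taut A) : Taut (relZ n Z A) := fun v => by
  rw [← evalWith_relZ v n Z A]; exact h _

end Helpers
section MoreHelpers

lemma S4h_axH {X : Fm} {m : ℕ} (h : Linf (Fm.box m X)) :
    S4h ((Fm.box m X).imp (Fm.box (m+1) X)) :=
  Prv.ax (Or.inl (Or.inl ⟨X, m, h, rfl⟩))

lemma S4h_axK {X Y : Fm} {m : ℕ} (h : Linf (Fm.box m (X.imp Y))) :
    S4h ((Fm.box m (X.imp Y)).imp ((Fm.box m X).imp (Fm.box m Y))) :=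
  Prv.ax (Or.inl (Or.inr (Or.inl ⟨X, Y, m, h, rfl⟩)))

lemma S4h_axFour {X : Fm} {m : ℕ} (h : Linf (Fm.box m X)) :
    S4h ((Fm.box m X).imp (Fm.box (m+1) (Fm.box m X))) :=
  Prv.ax (Or.inl (Or.inr (Or.inr ⟨X, m, h, rfl⟩)))

lemma S4h_axT {X : Fm} {m : ℕ} (h : Linf (Fm.box m X)) :
    S4h ((Fm.box m X).imp X) :=
  Prv.ax (Or.inr ⟨X, m, h, rfl⟩)

lemma S4h_weaken {Z X : Fm} (hZ : Linf Z) (h : S4h X) : S4h (Z.imp X) :=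
  prv_weaken (S4h_linf h) hZ h

lemma S4h_hs {X Y W : Fm} (h1 : S4h (X.imp Y)) (h2 : S4h (Y.imp W)) :
    S4h (X.imp W) :=
  prv_hs (linf_imp_inv (S4h_linf h1)).1 (linf_imp_inv (S4h_linf h1)).2
    (linf_imp_inv (S4h_linf h2)).2 h1 h2

lemma S4h_frege {X Y W : Fm} (h1 : S4h (X.imp (Y.imp W))) (h2 : S4h (X.imp Y)) :
    S4h (X.imp W) :=
  prv_frege (linf_imp_inv (S4h_linf h1)).1 (linf_imp_inv (S4h_linf h2)).2
    (linf_imp_inv (linf_imp_inv (S4h_linf h1)).2).2 h1 h2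

lemma S4h_swap {X Y W : Fm} (h : S4h (X.imp (Y.imp W))) : S4h (Y.imp (X.imp W)) :=
  prv_swap (linf_imp_inv (S4h_linf h)).1 (linf_imp_inv (linf_imp_inv (S4h_linf h)).2).1
    (linf_imp_inv (linf_imp_inv (S4h_linf h)).2).2 h

end MoreHelpers

/-- if `S4_h ⊢ A` then `S4_h ⊢ Z → A^Z`, for `Z ∈ L∞` with `r(Z) < n`. -/
theorem S4h_relativization (n : ℕ) (Z : Fm) (hZ : Linf Z) (hr : BoxLt Z n)
    (A : Fm) (h : S4h A) : S4h (Z.imp (relZ n Z A)) := by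
  induction h with
  | taut hL ht =>
    exact S4h_weaken hZ (Prv.taut (linf_relZ hZ hr hL) (taut_relZ ht))
  | mp h1 h2 ih1 ih2 =>
    simp only [relZ] at ih1
    exact S4h_frege ih1 ih2
  | nec m hp hlt ih =>
    rename_i B
    have lB := S4h_linf hp
    by_cases hm : m < n
    · have hBB : relZ n Z B = B := relZ_eq_self (fun j hj => lt_trans (hlt j hj) hm)
      simp only [relZ, if_pos hm, hBB]
      exact S4h_weaken hZ (Prv.nec m hp hlt)
    · have hnm : n ≤ m := Nat.le_of_not_lt hm
      simp only [relZ, if_neg hm]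
      have hbl : BoxLt (Z.imp (relZ n Z B)) m :=
        boxLt_imp_s8 (boxLt_mono_s8 hr hnm) (boxLt_relZ hr hnm hlt)
      exact S4h_weaken hZ (Prv.nec m ih hbl)
  | ax hax =>
    rcases hax with ((⟨B, m, hB, rfl⟩ | ⟨B, C, m, hBC, rfl⟩ | ⟨B, m, hB, rfl⟩) | ⟨B, m, hB, rfl⟩)
    · -- axH : (box m B).imp (box (m+1) B)
      obtain ⟨lB, bB⟩ := linf_box_inv_s8 hB
      by_cases hm : m < n
      · have hBB : relZ n Z B = B := relZ_eq_self (fun j hj => lt_trans (bB j hj) hm)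
        by_cases hm1 : m + 1 < n
        · simp only [relZ, if_pos hm, if_pos hm1, hBB]
          exact S4h_weaken hZ (S4h_axH hB)
        · have hn1 : n ≤ m + 1 := Nat.le_of_not_lt hm1
          simp only [relZ, if_pos hm, if_neg hm1, hBB]
          refine S4h_weaken hZ (S4h_hs (S4h_axH hB) ?_)
          exact S4h_box_mono lB (Linf.imp hZ lB)
            (boxLt_mono_s8 bB (Nat.le_succ m))
            (boxLt_imp_s8 (boxLt_mono_s8 hr hn1) (boxLt_mono_s8 bB (Nat.le_succ m)))
            (Prv.taut (Linf.imp lB (Linf.imp hZ lB)) (taut_weaken B Z))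
      · have hnm : n ≤ m := Nat.le_of_not_lt hm
        have hm1 : ¬ m + 1 < n := fun h' => hm (lt_trans (Nat.lt_succ_self m) h')
        simp only [relZ, if_neg hm, if_neg hm1]
        refine S4h_weaken hZ (S4h_axH ?_)
        exact Linf.box m (Linf.imp hZ (linf_relZ hZ hr lB))
          (boxLt_imp_s8 (boxLt_mono_s8 hr hnm) (boxLt_relZ hr hnm bB))
    · -- axK : (box m (B.imp C)).imp ((box m B).imp (box m C))
      obtain ⟨lBC, bBC⟩ := linf_box_inv_s8 hBC
      obtain ⟨lB, lC⟩ := linf_imp_inv lBC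
      have bB := boxLt_imp_left bBC
      have bC := boxLt_imp_right bBC
      by_cases hm : m < n
      · have hBB : relZ n Z B = B := relZ_eq_self (fun j hj => lt_trans (bB j hj) hm)
        have hCC : relZ n Z C = C := relZ_eq_self (fun j hj => lt_trans (bC j hj) hm)
        simp only [relZ, if_pos hm, hBB, hCC]
        exact S4h_weaken hZ (S4h_axK hBC)
      · have hnm : n ≤ m := Nat.le_of_not_lt hm
        simp only [relZ, if_neg hm]
        set rB := relZ n Z B with hrB
        set rC := relZ n Z C with hrC
        have lrB := linf_relZ hZ hr lB
        have lrC := linf_relZ hZ hr lC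
        have brB : BoxLt rB m := boxLt_relZ hr hnm bB
        have brC : BoxLt rC m := boxLt_relZ hr hnm bC
        have bZ : BoxLt Z m := boxLt_mono_s8 hr hnm
        -- step1 : (Z → (rB → rC)) → ((Z → rB) → (Z → rC))  (tautology)
        have step1 : S4h ((Z.imp (rB.imp rC)).imp ((Z.imp rB).imp (Z.imp rC))) :=
          Prv.taut (Linf.imp (Linf.imp hZ (Linf.imp lrB lrC))
            (Linf.imp (Linf.imp hZ lrB) (Linf.imp hZ lrC))) (taut_dist Z rB rC)
        have step2 : S4h ((Fm.box m (Z.imp (rB.imp rC))).imp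
            (Fm.box m ((Z.imp rB).imp (Z.imp rC)))) :=
          S4h_box_mono (Linf.imp hZ (Linf.imp lrB lrC))
            (Linf.imp (Linf.imp hZ lrB) (Linf.imp hZ lrC))
            (boxLt_imp_s8 bZ (boxLt_imp_s8 brB brC))
            (boxLt_imp_s8 (boxLt_imp_s8 bZ brB) (boxLt_imp_s8 bZ brC)) step1
        have step3 : S4h ((Fm.box m ((Z.imp rB).imp (Z.imp rC))).imp
            ((Fm.box m (Z.imp rB)).imp (Fm.box m (Z.imp rC)))) :=
          S4h_axK (Linf.box m (Linf.imp (Linf.imp hZ lrB) (Linf.imp hZ lrC))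
            (boxLt_imp_s8 (boxLt_imp_s8 bZ brB) (boxLt_imp_s8 bZ brC)))
        exact S4h_weaken hZ (S4h_hs step2 step3)
    · -- axFour : (box m B).imp (box (m+1) (box m B))
      obtain ⟨lB, bB⟩ := linf_box_inv_s8 hB
      by_cases hm : m < n
      · have hBB : relZ n Z B = B := relZ_eq_self (fun j hj => lt_trans (bB j hj) hm)
        by_cases hm1 : m + 1 < n
        · simp only [relZ, if_pos hm, if_pos hm1, hBB]
          exact S4h_weaken hZ (S4h_axFour hB)
        · have hn1 : n ≤ m + 1 := Nat.le_of_not_lt hm1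
          simp only [relZ, if_pos hm, if_neg hm1, hBB]
          refine S4h_weaken hZ (S4h_hs (S4h_axFour hB) ?_)
          have bBm1 : BoxLt (Fm.box m B) (m+1) :=
            boxLt_box_s8 (Nat.lt_succ_self m) (boxLt_mono_s8 bB (Nat.le_succ m))
          exact S4h_box_mono hB (Linf.imp hZ hB) bBm1
            (boxLt_imp_s8 (boxLt_mono_s8 hr hn1) bBm1)
            (Prv.taut (Linf.imp hB (Linf.imp hZ hB)) (taut_weaken (Fm.box m B) Z))
      · have hnm : n ≤ m := Nat.le_of_not_lt hm
        have hm1 : ¬ m + 1 < n := fun h' => hm (lt_trans (Nat.lt_succ_self m) h')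
        simp only [relZ, if_neg hm, if_neg hm1]
        set rB := relZ n Z B with hrB
        have lrB := linf_relZ hZ hr lB
        have bZ : BoxLt Z m := boxLt_mono_s8 hr hnm
        have brB : BoxLt rB m := boxLt_relZ hr hnm bB
        have lP : Linf (Fm.box m (Z.imp rB)) :=
          Linf.box m (Linf.imp hZ lrB) (boxLt_imp_s8 bZ brB)
        have bP1 : BoxLt (Fm.box m (Z.imp rB)) (m+1) :=
          boxLt_box_s8 (Nat.lt_succ_self m)
            (boxLt_mono_s8 (boxLt_imp_s8 bZ brB) (Nat.le_succ m))
        refine S4h_weaken hZ (S4h_hs (S4h_axFour lP) ?_)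
        exact S4h_box_mono lP (Linf.imp hZ lP) bP1
          (boxLt_imp_s8 (boxLt_mono_s8 hr (hnm.trans (Nat.le_succ m))) bP1)
          (Prv.taut (Linf.imp lP (Linf.imp hZ lP)) (taut_weaken (Fm.box m (Z.imp rB)) Z))
    · -- axT : (box m B).imp B
      obtain ⟨lB, bB⟩ := linf_box_inv_s8 hB
      by_cases hm : m < n
      · have hBB : relZ n Z B = B := relZ_eq_self (fun j hj => lt_trans (bB j hj) hm)
        simp only [relZ, if_pos hm, hBB]
        exact S4h_weaken hZ (S4h_axT hB)
      · have hnm : n ≤ m := Nat.le_of_not_lt hm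
        simp only [relZ, if_neg hm]
        have lrB := linf_relZ hZ hr lB
        have lP : Linf (Fm.box m (Z.imp (relZ n Z B))) :=
          Linf.box m (Linf.imp hZ lrB)
            (boxLt_imp_s8 (boxLt_mono_s8 hr hnm) (boxLt_relZ hr hnm bB))
        exact S4h_swap (S4h_axT lP)
end
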